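/- arXiv:1507.00535 — 7 statements merged into one kernel-verified Lean document; each statement's English description precedes it below -/
import Mathlib

section
/- Let A ∈ ℝ^{s×s}, b ∈ ℝ^s, B = diag(b) with all b_i ≠ 0, and suppose BA + AᵀB = bbᵀ (symplecticity). Let F = diag(F₁,…,F_s) with F_i ∈ ℝ^{n×n}. Then det(I_{sn} - h((A - 𝟙bᵀ) ⊗ I_n) F) = det(I_{sn} + h(Aᵀ ⊗ I_n) F). -/
open Matrix Kronecker

/-!
Symplecticity says exactly that `B (A - 𝟙bᵀ) = -Aᵀ B`. Hence `D = B ⊗ Iₙ` satisfies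
`D ((A - 𝟙bᵀ) ⊗ Iₙ) = -(Aᵀ ⊗ Iₙ) D`, and `D` commutes with the block-diagonal `F`, so
`D (I - h ((A - 𝟙bᵀ) ⊗ Iₙ) F) = (I + h (Aᵀ ⊗ Iₙ) F) D`. As all `bᵢ ≠ 0`, `D` is invertible and
the two determinants agree.
-/

namespace Matrix

variable {ι κ R : Type*} [Fintype ι] [DecidableEq ι]

theorem diagonal_mul_sub_vecMulVec_one [CommRing R] {A : Matrix ι ι R} {b : ι → R}
    (hsympl : diagonal b * A + Aᵀ * diagonal b = vecMulVec b b) :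
    diagonal b * (A - vecMulVec (fun _ => 1) b) = -(Aᵀ * diagonal b) := by
  have hdiag : diagonal b * vecMulVec (fun _ => 1) b = vecMulVec b b := by
    rw [mul_vecMulVec]
    congr
    ext i
    simp [mulVec_diagonal]
  rw [mul_sub, hdiag, ← hsympl]
  abel

theorem commute_diagonal_kronecker_one [CommSemiring R] [Fintype κ] [DecidableEq κ] (d : ι → R)
    {M : Matrix (ι × κ) (ι × κ) R} (hM : ∀ p q, p.1 ≠ q.1 → M p q = 0) :
    Commute (diagonal d ⊗ₖ (1 : Matrix κ κ R)) M := by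
  rw [← diagonal_one, diagonal_kronecker_diagonal]
  ext p q
  rw [diagonal_mul, mul_diagonal]
  by_cases hpq : p.1 = q.1
  · rw [hpq, mul_comm]
  · rw [hM p q hpq, mul_zero, zero_mul]

theorem det_eq_det_of_mul_eq_mul [CommRing R] {D X Y : Matrix ι ι R} (hD : IsUnit D.det)
    (h : D * X = Y * D) : X.det = Y.det := by
  have := congrArg det h
  rw [det_mul, det_mul, mul_comm Y.det] at this
  exact hD.mul_left_cancel this

theorem mul_one_sub_smul_mul_eq [CommRing R] {D K K' G : Matrix ι ι R} (h : R)
    (hK : D * K = -(K' * D)) (hG : Commute D G) :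
    D * (1 - h • (K * G)) = (1 + h • (K' * G)) * D := by
  have hKG : D * (K * G) = -(K' * G * D) := by
    rw [← Matrix.mul_assoc, hK, Matrix.neg_mul, Matrix.mul_assoc, hG.eq, Matrix.mul_assoc]
  rw [Matrix.mul_sub, Matrix.mul_smul, hKG, Matrix.add_mul, Matrix.mul_one, Matrix.one_mul,
    Matrix.smul_mul, smul_neg, sub_neg_eq_add]

end Matrix

theorem stmt_11 {s n : ℕ} (A : Matrix (Fin s) (Fin s) ℝ) (b : Fin s → ℝ)
    (hb : ∀ i, b i ≠ 0)
    (hsympl : Matrix.diagonal b * A + Aᵀ * Matrix.diagonal b = Matrix.vecMulVec b b)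
    (Fblocks : Fin s → Matrix (Fin n) (Fin n) ℝ) (h : ℝ) :
    ((1 : Matrix (Fin s × Fin n) (Fin s × Fin n) ℝ)
        - h • (((A - Matrix.vecMulVec (fun _ => (1 : ℝ)) b) ⊗ₖ (1 : Matrix (Fin n) (Fin n) ℝ)) *
            Matrix.of (fun p q : Fin s × Fin n =>
              if p.1 = q.1 then Fblocks p.1 p.2 q.2 else 0))).det
      = ((1 : Matrix (Fin s × Fin n) (Fin s × Fin n) ℝ)
        + h • ((Aᵀ ⊗ₖ (1 : Matrix (Fin n) (Fin n) ℝ)) *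
            Matrix.of (fun p q : Fin s × Fin n =>
              if p.1 = q.1 then Fblocks p.1 p.2 q.2 else 0))).det := by
  set D : Matrix (Fin s × Fin n) (Fin s × Fin n) ℝ := diagonal b ⊗ₖ 1
  have hK : D * ((A - vecMulVec (fun _ => 1) b) ⊗ₖ (1 : Matrix (Fin n) (Fin n) ℝ))
      = -((Aᵀ ⊗ₖ 1) * D) := by
    rw [← mul_kronecker_mul, ← mul_kronecker_mul, diagonal_mul_sub_vecMulVec_one hsympl,
      ← neg_one_smul ℝ (Aᵀ * _), smul_kronecker, neg_one_smul]
  have hG := commute_diagonal_kronecker_one (κ := Fin n) b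
    (M := of fun p q : Fin s × Fin n => if p.1 = q.1 then Fblocks p.1 p.2 q.2 else 0)
    fun p q hpq => if_neg hpq
  have hD : IsUnit D.det := by
    rw [isUnit_iff_ne_zero, det_kronecker, det_diagonal, det_one, one_pow, mul_one]
    exact pow_ne_zero _ (Finset.prod_ne_zero_iff.mpr fun i _ => hb i)
  exact det_eq_det_of_mul_eq_mul hD (mul_one_sub_smul_mul_eq h hK hG)
end

section
/- Let A ∈ ℝ^{s×s} and let P ∈ ℝ^{n×n} be invertible. Let F = diag(F₁,…,F_s) with each F_i ∈ ℝ^{n×n} satisfying P F_i P⁻¹ = -F_iᵀ. Then det(I_{sn} - h(A ⊗ I_n) F) = det(I_{sn} + h(Aᵀ ⊗ I_n) F) for all h. -/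
/-!
Conjugation by `Q = I_s ⊗ P` fixes `A ⊗ I_n` and sends the block-diagonal `F` to `-Fᵀ`, so
`det(I - h(A ⊗ I)F) = det(I + h(A ⊗ I)Fᵀ)`. Transposing and then using
`det(I + XY) = det(I + YX)` turns the right-hand side into `det(I + h(Aᵀ ⊗ I)F)`.
-/

open Matrix Kronecker

namespace Matrix

section BlockDiagonalFst

variable {ι κ R : Type*} [DecidableEq ι] [CommRing R]

/-- Block-diagonal matrix indexed by (block, position in the block); Mathlib's `blockDiagonal`
puts the block index second. -/
def blockDiagonalFst (F : ι → Matrix κ κ R) : Matrix (ι × κ) (ι × κ) R :=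
  of fun p q => if p.1 = q.1 then F p.1 p.2 q.2 else 0

theorem blockDiagonalFst_mul [Fintype ι] [Fintype κ] (F G : ι → Matrix κ κ R) :
    blockDiagonalFst F * blockDiagonalFst G = blockDiagonalFst fun i => F i * G i := by
  ext ⟨i, a⟩ ⟨j, b⟩
  simp only [blockDiagonalFst, mul_apply, of_apply, Fintype.sum_prod_type, ite_mul, zero_mul,
    mul_ite, mul_zero]
  split_ifs with hij <;> simp [hij]

theorem transpose_blockDiagonalFst (F : ι → Matrix κ κ R) :
    (blockDiagonalFst F)ᵀ = blockDiagonalFst fun i => (F i)ᵀ := by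
  ext ⟨i, a⟩ ⟨j, b⟩
  by_cases hij : i = j
  · subst hij
    simp [blockDiagonalFst]
  · simp [blockDiagonalFst, hij, Ne.symm hij]

theorem neg_blockDiagonalFst (F : ι → Matrix κ κ R) :
    -blockDiagonalFst F = blockDiagonalFst fun i => -F i := by
  ext ⟨i, a⟩ ⟨j, b⟩
  simp only [blockDiagonalFst, neg_apply, of_apply]
  split_ifs <;> simp

theorem one_kronecker_eq_blockDiagonalFst [DecidableEq κ] (P : Matrix κ κ R) :
    (1 : Matrix ι ι R) ⊗ₖ P = blockDiagonalFst fun _ => P := by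
  ext ⟨i, a⟩ ⟨j, b⟩
  simp only [blockDiagonalFst, kroneckerMap_apply, one_apply, of_apply]
  split_ifs <;> simp

theorem one_kronecker_mul_blockDiagonalFst [Fintype ι] [Fintype κ] [DecidableEq κ]
    {P : Matrix κ κ R} {F : ι → Matrix κ κ R} (hPF : ∀ i, P * F i = -(F i)ᵀ * P) :
    (1 : Matrix ι ι R) ⊗ₖ P * blockDiagonalFst F
      = -(blockDiagonalFst F)ᵀ * ((1 : Matrix ι ι R) ⊗ₖ P) := by
  simp only [one_kronecker_eq_blockDiagonalFst, blockDiagonalFst_mul, transpose_blockDiagonalFst,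
    neg_blockDiagonalFst, hPF]

end BlockDiagonalFst

theorem det_one_sub_mul_eq_det_one_add_transpose_mul {m R : Type*} [Fintype m] [DecidableEq m]
    [CommRing R] {M F Q : Matrix m m R} (hQ : IsUnit Q.det) (hQM : Commute Q M)
    (hQF : Q * F = -Fᵀ * Q) :
    det (1 - M * F) = det (1 + Mᵀ * F) := by
  have hconj : Q * (1 - M * F) = (1 + M * Fᵀ) * Q := by
    rw [Matrix.mul_sub, ← Matrix.mul_assoc, hQM.eq, Matrix.mul_assoc, hQF, Matrix.add_mul,
      Matrix.neg_mul, Matrix.mul_neg, sub_neg_eq_add, Matrix.mul_one, Matrix.one_mul,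
      Matrix.mul_assoc]
  have hdet : det (1 - M * F) = det (1 + M * Fᵀ) := by
    apply hQ.mul_left_cancel
    rw [← det_mul, hconj, det_mul, mul_comm]
  rw [hdet, det_one_add_mul_comm, ← det_transpose]
  simp only [transpose_add, transpose_one, transpose_mul, transpose_transpose]

end Matrix

theorem stmt_12 {s n : ℕ} (A : Matrix (Fin s) (Fin s) ℝ)
    (P : Matrix (Fin n) (Fin n) ℝ) (hP : IsUnit P.det)
    (Fblocks : Fin s → Matrix (Fin n) (Fin n) ℝ)
    (hF : ∀ i, P * Fblocks i * P⁻¹ = -(Fblocks i)ᵀ) :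
    ∀ h : ℝ,
      ((1 : Matrix (Fin s × Fin n) (Fin s × Fin n) ℝ)
          - h • ((A ⊗ₖ (1 : Matrix (Fin n) (Fin n) ℝ)) *
              Matrix.of (fun p q : Fin s × Fin n =>
                if p.1 = q.1 then Fblocks p.1 p.2 q.2 else 0))).det
        = ((1 : Matrix (Fin s × Fin n) (Fin s × Fin n) ℝ)
          + h • ((Aᵀ ⊗ₖ (1 : Matrix (Fin n) (Fin n) ℝ)) *
              Matrix.of (fun p q : Fin s × Fin n =>
                if p.1 = q.1 then Fblocks p.1 p.2 q.2 else 0))).det := by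
  intro h
  have hPF : ∀ i, P * Fblocks i = -(Fblocks i)ᵀ * P := fun i => by
    rw [← hF i]
    exact (nonsing_inv_mul_cancel_right P _ hP).symm
  have hQ : IsUnit ((1 : Matrix (Fin s) (Fin s) ℝ) ⊗ₖ P).det := by
    simpa [det_kronecker] using hP.pow _
  have hQM : Commute ((1 : Matrix (Fin s) (Fin s) ℝ) ⊗ₖ P) (h • (A ⊗ₖ 1)) := by
    refine Commute.smul_right ?_ h
    simp only [Commute, SemiconjBy, ← mul_kronecker_mul, one_mul, mul_one]
  have key := det_one_sub_mul_eq_det_one_add_transpose_mul hQ hQM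
    (one_kronecker_mul_blockDiagonalFst hPF)
  rw [transpose_smul, ← kroneckerMap_transpose, transpose_one, smul_mul, smul_mul] at key
  exact key
end

section
/- Let A ∈ ℝ^{2×2} and let P ∈ ℝ^{n×n} be invertible with P F_i P⁻¹ = -F_i for i = 1, 2, where F₁, F₂ ∈ ℝ^{n×n}. Then det(I - h a₁₁ F₁ - h a₂₂ F₂ + h² det(A) F₁ F₂) = det(I + h a₁₁ F₁ + h a₂₂ F₂ + h² det(A) F₁ F₂). -/
/-!
Conjugation by `P` is a ring automorphism fixing scalars which negates `F₁` and `F₂`, hence fixes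
`F₁ * F₂`; it therefore carries the left-hand matrix to the right-hand one, and the determinant is
invariant under conjugation.
-/

open Matrix

section SignReversingConjugation

variable {K R : Type*} [CommRing K] [Ring R] [Algebra K R] (u : Rˣ) {a b : R}

theorem Units.conj_mul_eq_of_conj_eq_neg (ha : u * a * ↑u⁻¹ = -a) (hb : u * b * ↑u⁻¹ = -b) :
    u * (a * b) * ↑u⁻¹ = a * b := by
  calc u * (a * b) * ↑u⁻¹ = (u * a * ↑u⁻¹) * (u * b * ↑u⁻¹) := by
        simp only [mul_assoc, Units.inv_mul_cancel_left]
    _ = a * b := by rw [ha, hb, neg_mul_neg]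

theorem Units.conj_one_sub_smul_sub_smul_add_smul_mul (ha : u * a * ↑u⁻¹ = -a)
    (hb : u * b * ↑u⁻¹ = -b) (s t r : K) :
    u * (1 - s • a - t • b + r • (a * b)) * ↑u⁻¹ = 1 + s • a + t • b + r • (a * b) := by
  simp only [mul_add, mul_sub, add_mul, sub_mul, mul_smul_comm, smul_mul_assoc, mul_one,
    Units.mul_inv, ha, hb, u.conj_mul_eq_of_conj_eq_neg ha hb, smul_neg, sub_neg_eq_add]

end SignReversingConjugation

theorem stmt_13 {n : ℕ} (A : Matrix (Fin 2) (Fin 2) ℝ)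
    (P : Matrix (Fin n) (Fin n) ℝ) (hP : IsUnit P.det)
    (F₁ F₂ : Matrix (Fin n) (Fin n) ℝ)
    (hF₁ : P * F₁ * P⁻¹ = -F₁) (hF₂ : P * F₂ * P⁻¹ = -F₂) (h : ℝ) :
    ((1 : Matrix (Fin n) (Fin n) ℝ) - (h * A 0 0) • F₁ - (h * A 1 1) • F₂
        + (h ^ 2 * A.det) • (F₁ * F₂)).det
      = ((1 : Matrix (Fin n) (Fin n) ℝ) + (h * A 0 0) • F₁ + (h * A 1 1) • F₂
        + (h ^ 2 * A.det) • (F₁ * F₂)).det := by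
  rw [← det_units_conj (nonsingInvUnit P hP),
    (nonsingInvUnit P hP).conj_one_sub_smul_sub_smul_add_smul_mul hF₁ hF₂]
end

section
/- For matrices C₁, C₂ ∈ ℝ^{n×n} and A = (a_{ij}) ∈ ℝ^{2×2}, det of the 2×2 block matrix [[I - h a₁₁ C₁, -h a₁₂ C₂], [-h a₂₁ C₁, I - h a₂₂ C₂]] equals det(I - h a₁₁ C₁ - h a₂₂ C₂ + h² det(A) C₁ C₂). -/
/-!
The blocks `U = 1 - h a₁₁ C₁` and `W = -h a₂₁ C₁` commute, so the block determinant is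
`det (U X - W V)`, and expanding `U X - W V` gives the right-hand side.
-/

open Matrix Polynomial

namespace Matrix

variable {n R : Type*} [Fintype n] [DecidableEq n] [CommRing R]

theorem det_mul_det_fromBlocks_of_commute (U V W X : Matrix n n R) (hWU : Commute W U) :
    U.det * (fromBlocks U V W X).det = U.det * (U * X - W * V).det := by
  have hfactor :
      fromBlocks 1 0 (-W) U * fromBlocks U V W X = fromBlocks U V 0 (U * X - W * V) := by
    simp [fromBlocks_multiply, hWU.eq, sub_eq_neg_add]
  simpa [det_fromBlocks_zero₁₂, det_fromBlocks_zero₂₁] using congrArg det hfactor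

theorem charmatrix_neg_map_evalRingHom_zero (U : Matrix n n R) :
    (charmatrix (-U)).map (evalRingHom 0) = U := by
  ext i j
  by_cases hij : i = j
  · subst hij; simp [charmatrix_apply_eq]
  · simp [charmatrix_apply_ne _ _ _ hij]

theorem det_fromBlocks_of_commute (U V W X : Matrix n n R) (hWU : Commute W U) :
    (fromBlocks U V W X).det = (U * X - W * V).det := by
  -- Over `R[X]`, `charmatrix (-U) = X • 1 + U` still commutes with `W` and has monic, hence
  -- cancellable, determinant; evaluating at `X = 0` recovers the identity for `U`.
  have hWU' : Commute (W.map C) (charmatrix (-U)) :=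
    (scalar_commute _ (Commute.all _) _).symm.sub_right ((hWU.neg_right).map C.mapMatrix)
  have key := (charpoly_monic (-U)).isRegular.left
    (det_mul_det_fromBlocks_of_commute _ (V.map C) (W.map C) (X.map C) hWU')
  have hC (M : Matrix n n R) : (M.map C).map (evalRingHom 0) = M := by
    ext; simp
  have := congrArg (evalRingHom 0) key
  simp only [RingHom.map_det, map_sub, map_mul] at this
  simpa only [RingHom.mapMatrix_apply, fromBlocks_map, charmatrix_neg_map_evalRingHom_zero, hC]
    using this

end Matrix

theorem stmt_14 {n : ℕ} (C₁ C₂ : Matrix (Fin n) (Fin n) ℝ)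
    (A : Matrix (Fin 2) (Fin 2) ℝ) (h : ℝ) :
    (Matrix.fromBlocks
        ((1 : Matrix (Fin n) (Fin n) ℝ) - (h * A 0 0) • C₁) (-((h * A 0 1) • C₂))
        (-((h * A 1 0) • C₁)) ((1 : Matrix (Fin n) (Fin n) ℝ) - (h * A 1 1) • C₂)).det
      = ((1 : Matrix (Fin n) (Fin n) ℝ) - (h * A 0 0) • C₁ - (h * A 1 1) • C₂
        + (h ^ 2 * A.det) • (C₁ * C₂)).det := by
  have hcomm : Commute (-((h * A 1 0) • C₁)) (1 - (h * A 0 0) • C₁) :=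
    (((Commute.one_right C₁).sub_right ((Commute.refl C₁).smul_right _)).smul_left _).neg_left
  rw [det_fromBlocks_of_commute _ _ _ _ hcomm, det_fin_two A]
  congr 1
  simp only [Matrix.mul_sub, Matrix.sub_mul, Matrix.mul_one, Matrix.one_mul, Matrix.mul_smul,
    Matrix.smul_mul, Matrix.neg_mul, Matrix.mul_neg, sub_neg_eq_add]
  module
end

section
/- If f : ℝ^n → ℝ^n is continuously differentiable with det(I + (h/2)f'(x)) = det(I - (h/2)f'(x)) for all x and h > 0, and φ_h is the implicit midpoint map, i.e. φ_h(x) = x + h f((x + φ_h(x))/2) with φ_h differentiable and det(I - (h/2) f'((x+φ_h(x))/2)) ≠ 0, then det(φ_h'(x)) = 1 for all x. -/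
/-!
Differentiating `φ x = x + h • f ((x + φ x) / 2)` gives `J = 1 + (h/2) A (1 + J)` with `J = φ'(x)`
and `A` the Jacobian of `f` at the midpoint, i.e. `(1 - (h/2) A) J = 1 + (h/2) A`. Taking
determinants, `det (1 - (h/2) A) * det J = det (1 + (h/2) A) = det (1 - (h/2) A)`, and the
common factor is nonzero.
-/

open Matrix

/-- The Jacobian matrix of a map `f : ℝ^n → ℝ^n` at a point `x`. -/
noncomputable def jacobian {ι : Type*} [Fintype ι] [DecidableEq ι]
    (f : (ι → ℝ) → (ι → ℝ)) (x : ι → ℝ) : Matrix ι ι ℝ :=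
  Matrix.of fun i j => fderiv ℝ f x (Pi.single j 1) i

open Filter Topology

lemma jacobian_eq_toMatrix'_fderiv {ι : Type*} [Fintype ι] [DecidableEq ι]
    (f : (ι → ℝ) → (ι → ℝ)) (x : ι → ℝ) :
    jacobian f x = LinearMap.toMatrix' (fderiv ℝ f x : (ι → ℝ) →ₗ[ℝ] (ι → ℝ)) := by
  ext i j
  rfl

lemma fderiv_of_implicit_midpoint {E : Type*} [NormedAddCommGroup E] [NormedSpace ℝ E]
    {f φ : E → E} {h : ℝ} {x : E}
    (hmid : ∀ᶠ y in 𝓝 x, φ y = y + h • f ((1 / 2 : ℝ) • (y + φ y)))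
    (hφ : DifferentiableAt ℝ φ x) (hf : DifferentiableAt ℝ f ((1 / 2 : ℝ) • (x + φ x))) :
    (ContinuousLinearMap.id ℝ E - (h / 2) • fderiv ℝ f ((1 / 2 : ℝ) • (x + φ x))) ∘L fderiv ℝ φ x
      = ContinuousLinearMap.id ℝ E + (h / 2) • fderiv ℝ f ((1 / 2 : ℝ) • (x + φ x)) := by
  set F := fderiv ℝ f ((1 / 2 : ℝ) • (x + φ x))
  set L := fderiv ℝ φ x
  have hmidpoint : HasFDerivAt (fun y => (1 / 2 : ℝ) • (y + φ y))
      ((1 / 2 : ℝ) • (ContinuousLinearMap.id ℝ E + L)) x :=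
    ((hasFDerivAt_id x).add hφ.hasFDerivAt).const_smul _
  have hrhs : HasFDerivAt (fun y => y + h • f ((1 / 2 : ℝ) • (y + φ y)))
      (ContinuousLinearMap.id ℝ E + h • F.comp ((1 / 2 : ℝ) • (ContinuousLinearMap.id ℝ E + L))) x :=
    (hasFDerivAt_id x).add ((hf.hasFDerivAt.comp x hmidpoint).const_smul h)
  have hL : L =
      ContinuousLinearMap.id ℝ E + h • F.comp ((1 / 2 : ℝ) • (ContinuousLinearMap.id ℝ E + L)) :=
    hφ.hasFDerivAt.unique (hrhs.congr_of_eventuallyEq hmid)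
  ext v
  have hv := congr($hL v)
  simp only [_root_.add_apply, ContinuousLinearMap.coe_id', id_eq, FunLike.coe_smul, Pi.smul_apply,
    ContinuousLinearMap.coe_comp, Function.comp_apply, map_add, map_smul] at hv
  simp only [ContinuousLinearMap.coe_comp, Function.comp_apply, _root_.sub_apply,
    ContinuousLinearMap.coe_id', id_eq, FunLike.coe_smul, Pi.smul_apply, _root_.add_apply]
  linear_combination (norm := module) hv

lemma jacobian_mul_of_implicit_midpoint {ι : Type*} [Fintype ι] [DecidableEq ι]
    {f φ : (ι → ℝ) → (ι → ℝ)} {h : ℝ} {x : ι → ℝ}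
    (hmid : ∀ᶠ y in 𝓝 x, φ y = y + h • f ((1 / 2 : ℝ) • (y + φ y)))
    (hφ : DifferentiableAt ℝ φ x) (hf : DifferentiableAt ℝ f ((1 / 2 : ℝ) • (x + φ x))) :
    (1 - (h / 2) • jacobian f ((1 / 2 : ℝ) • (x + φ x))) * jacobian φ x
      = 1 + (h / 2) • jacobian f ((1 / 2 : ℝ) • (x + φ x)) := by
  have hL := fderiv_of_implicit_midpoint hmid hφ hf
  have hM := congr(LinearMap.toMatrix' ($hL : (ι → ℝ) →ₗ[ℝ] (ι → ℝ)))
  simpa [jacobian_eq_toMatrix'_fderiv, LinearMap.toMatrix'_comp, sub_mul] using hM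

theorem stmt_15 {n : ℕ} (f : (Fin n → ℝ) → (Fin n → ℝ)) (hf : ContDiff ℝ 1 f)
    (hdet : ∀ (x : Fin n → ℝ) (h : ℝ), 0 < h →
      ((1 : Matrix (Fin n) (Fin n) ℝ) + (h / 2) • jacobian f x).det
        = ((1 : Matrix (Fin n) (Fin n) ℝ) - (h / 2) • jacobian f x).det)
    (h : ℝ) (hh : 0 < h)
    (φ : (Fin n → ℝ) → (Fin n → ℝ)) (hφ : Differentiable ℝ φ)
    (hmid : ∀ x, φ x = x + h • f ((1 / 2 : ℝ) • (x + φ x)))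
    (hinv : ∀ x,
      ((1 : Matrix (Fin n) (Fin n) ℝ)
        - (h / 2) • jacobian f ((1 / 2 : ℝ) • (x + φ x))).det ≠ 0) :
    ∀ x, (jacobian φ x).det = 1 := by
  intro x
  have hJ := jacobian_mul_of_implicit_midpoint (.of_forall hmid) (hφ x)
    (hf.differentiable one_ne_zero _)
  have hdetJ := congr(det $hJ)
  rw [det_mul, hdet _ h hh] at hdetJ
  exact (mul_eq_left₀ (hinv x)).1 hdetJ
end

section
/- Let f : ℝ^n → ℝ^n be C¹ with det(I + (h/2)f'(x)) = det(I - (h/2)f'(x)) for all x, and let φ_h be the trapezoidal map satisfying φ_h(x) = x + (h/2)(f(x) + f(φ_h(x))) with φ_h differentiable and det(I - (h/2)f'(φ_h(x))) ≠ 0. Then det(φ_h'(x)) · μ(φ_h(x)) = μ(x), where μ(x) = det(I - (h/2)f'(x)). -/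
/-! Differentiating the trapezoidal relation `φ x = x + (h/2)(f x + f (φ x))` gives
`(I - (h/2) f'(φ x)) φ'(x) = I + (h/2) f'(x)`; taking determinants and using
`det (I + (h/2) f') = det (I - (h/2) f')` at `x` yields the claim. -/

open Matrix

section Jacobian

variable {ι : Type*} [Fintype ι] [DecidableEq ι]

lemma jacobian_eq_toMatrix' (f : (ι → ℝ) → (ι → ℝ)) (x : ι → ℝ) :
    jacobian f x = LinearMap.toMatrix' (fderiv ℝ f x : (ι → ℝ) →ₗ[ℝ] (ι → ℝ)) := by
  ext i j
  simp [jacobian, LinearMap.toMatrix'_apply]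

lemma HasFDerivAt.jacobian_eq {f : (ι → ℝ) → (ι → ℝ)} {f' : (ι → ℝ) →L[ℝ] (ι → ℝ)}
    {x : ι → ℝ} (hf : HasFDerivAt f f' x) :
    jacobian f x = LinearMap.toMatrix' (f' : (ι → ℝ) →ₗ[ℝ] (ι → ℝ)) := by
  rw [jacobian_eq_toMatrix', hf.fderiv]

lemma one_sub_smul_jacobian_mul_jacobian_of_trapezoid {f φ : (ι → ℝ) → (ι → ℝ)} {c : ℝ}
    {x : ι → ℝ} (hfx : DifferentiableAt ℝ f x) (hfφ : DifferentiableAt ℝ f (φ x))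
    (hφ : DifferentiableAt ℝ φ x) (htrap : ∀ y, φ y = y + c • (f y + f (φ y))) :
    (1 - c • jacobian f (φ x)) * jacobian φ x = 1 + c • jacobian f x := by
  have hD : HasFDerivAt φ (ContinuousLinearMap.id ℝ (ι → ℝ) +
      c • (fderiv ℝ f x + (fderiv ℝ f (φ x)).comp (fderiv ℝ φ x))) x :=
    ((hasFDerivAt_id x).add ((hfx.hasFDerivAt.add
      (hfφ.hasFDerivAt.comp x hφ.hasFDerivAt)).const_smul c)).congr_of_eventuallyEq
      (Filter.Eventually.of_forall htrap)
  have hJ : jacobian φ x = 1 + c • (jacobian f x + jacobian f (φ x) * jacobian φ x) := by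
    conv_lhs => rw [hD.jacobian_eq]
    simp only [ContinuousLinearMap.toLinearMap_add, ContinuousLinearMap.toLinearMap_smul,
      ContinuousLinearMap.coe_id, ContinuousLinearMap.toLinearMap_comp, map_add, map_smul,
      LinearMap.toMatrix'_id, LinearMap.toMatrix'_comp, ← jacobian_eq_toMatrix']
  rw [sub_mul, one_mul, smul_mul_assoc]
  nth_rewrite 1 [hJ]
  rw [smul_add]
  abel

end Jacobian

theorem stmt_16_general {n : ℕ} (f : (Fin n → ℝ) → (Fin n → ℝ)) (hf : ContDiff ℝ 1 f)
    (h : ℝ)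
    (hdet : ∀ x : Fin n → ℝ,
      ((1 : Matrix (Fin n) (Fin n) ℝ) + (h / 2) • jacobian f x).det
        = ((1 : Matrix (Fin n) (Fin n) ℝ) - (h / 2) • jacobian f x).det)
    (φ : (Fin n → ℝ) → (Fin n → ℝ)) (hφ : Differentiable ℝ φ)
    (htrap : ∀ x, φ x = x + (h / 2) • (f x + f (φ x))) :
    ∀ x, (jacobian φ x).det *
        ((1 : Matrix (Fin n) (Fin n) ℝ) - (h / 2) • jacobian f (φ x)).det
      = ((1 : Matrix (Fin n) (Fin n) ℝ) - (h / 2) • jacobian f x).det := by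
  intro x
  have hfd : Differentiable ℝ f := hf.differentiable one_ne_zero
  have key := congrArg det
    (one_sub_smul_jacobian_mul_jacobian_of_trapezoid (hfd x) (hfd (φ x)) (hφ x) htrap)
  rwa [det_mul, hdet x, mul_comm] at key

theorem stmt_16 {n : ℕ} (f : (Fin n → ℝ) → (Fin n → ℝ)) (hf : ContDiff ℝ 1 f)
    (h : ℝ)
    (hdet : ∀ x : Fin n → ℝ,
      ((1 : Matrix (Fin n) (Fin n) ℝ) + (h / 2) • jacobian f x).det
        = ((1 : Matrix (Fin n) (Fin n) ℝ) - (h / 2) • jacobian f x).det)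
    (φ : (Fin n → ℝ) → (Fin n → ℝ)) (hφ : Differentiable ℝ φ)
    (htrap : ∀ x, φ x = x + (h / 2) • (f x + f (φ x)))
    (hinv : ∀ x,
      ((1 : Matrix (Fin n) (Fin n) ℝ) - (h / 2) • jacobian f (φ x)).det ≠ 0) :
    ∀ x, (jacobian φ x).det *
        ((1 : Matrix (Fin n) (Fin n) ℝ) - (h / 2) • jacobian f (φ x)).det
      = ((1 : Matrix (Fin n) (Fin n) ℝ) - (h / 2) • jacobian f x).det :=
  stmt_16_general f hf h hdet φ hφ htrap
end

section
/- For a quadratic vector field f(x) = q(x,x) + Lx + d with q symmetric bilinear, and coefficients b_i, c_i with Σb_i = 1, Σb_i c_i = 1/2, Σb_i c_i² = 0, any solution x' of x' = x + h Σ_i b_i f(x + c_i(x'-x)) satisfies Kahan's relation (x'-x)/h = q(x,x') + (1/2)L(x+x') + d. -/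
/-!
A degree-two polynomial map equals its second-order Taylor expansion:
`f (x + c • v) = f x + c • (2 q x v + L v) + c² • q v v`. Averaging over the stages with weights
`b i` turns the coefficients `1, c, c²` into the moments `∑ b i = 1`, `∑ b i c i = 1/2` and
`∑ b i c i² = 0`, which leaves exactly the right-hand side of Kahan's scheme at `x' = x + v`.
-/

open Finset

section QuadraticMap

variable {R M : Type*} [CommRing R] [AddCommGroup M] [Module R M]
  {q : M →ₗ[R] M →ₗ[R] M} {L : M →ₗ[R] M} {d : M} {f : M → M}

theorem quadratic_map_add_smul (hq : ∀ x y, q x y = q y x) (hf : ∀ x, f x = q x x + L x + d)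
    (x v : M) (t : R) :
    f (x + t • v) = f x + t • ((2 : R) • q x v + L v) + t ^ 2 • q v v := by
  simp only [hf, map_add, map_smul, LinearMap.add_apply, LinearMap.smul_apply, hq v x]
  module

theorem sum_smul_quadratic_map_add_smul {ι : Type*} (s : Finset ι) (b c : ι → R)
    (hq : ∀ x y, q x y = q y x) (hf : ∀ x, f x = q x x + L x + d) (x v : M) :
    ∑ i ∈ s, b i • f (x + c i • v) =
      (∑ i ∈ s, b i) • f x + (∑ i ∈ s, b i * c i) • ((2 : R) • q x v + L v)
        + (∑ i ∈ s, b i * c i ^ 2) • q v v := by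
  simp only [quadratic_map_add_smul hq hf, smul_add, sum_add_distrib, sum_smul, mul_smul]

end QuadraticMap

theorem sum_smul_quadratic_map_eq_kahan {𝕜 M ι : Type*} [Field 𝕜] [NeZero (2 : 𝕜)]
    [AddCommGroup M] [Module 𝕜 M] {q : M →ₗ[𝕜] M →ₗ[𝕜] M} {L : M →ₗ[𝕜] M} {d : M}
    {f : M → M} (hq : ∀ x y, q x y = q y x) (hf : ∀ x, f x = q x x + L x + d)
    (s : Finset ι) (b c : ι → 𝕜) (hb : ∑ i ∈ s, b i = 1)
    (hbc : ∑ i ∈ s, b i * c i = 1 / 2) (hbc2 : ∑ i ∈ s, b i * c i ^ 2 = 0) (x x' : M) :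
    ∑ i ∈ s, b i • f (x + c i • (x' - x)) = q x x' + (1 / 2 : 𝕜) • L (x + x') + d := by
  rw [sum_smul_quadratic_map_add_smul s b c hq hf, hb, hbc, hbc2, hf]
  simp only [map_sub, map_add]
  match_scalars <;> field_simp <;> ring

theorem stmt_18 {n s : ℕ}
    (q : (Fin n → ℝ) →ₗ[ℝ] (Fin n → ℝ) →ₗ[ℝ] (Fin n → ℝ))
    (hq : ∀ x y, q x y = q y x)
    (L : (Fin n → ℝ) →ₗ[ℝ] (Fin n → ℝ)) (d : Fin n → ℝ)
    (f : (Fin n → ℝ) → (Fin n → ℝ))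
    (hf : ∀ x, f x = q x x + L x + d)
    (b c : Fin s → ℝ)
    (hb : ∑ i, b i = 1) (hbc : ∑ i, b i * c i = 1 / 2)
    (hbc2 : ∑ i, b i * c i ^ 2 = 0)
    (h : ℝ) (x x' : Fin n → ℝ)
    (hx' : x' = x + h • ∑ i, b i • f (x + c i • (x' - x))) :
    x' - x = h • (q x x' + (1 / 2 : ℝ) • L (x + x') + d) := by
  rw [← sum_smul_quadratic_map_eq_kahan hq hf univ b c hb hbc hbc2]
  exact sub_eq_of_eq_add' hx'
end
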